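/- Let C be a closed convex cone in ℝ^n admitting a compact convex base K (i.e. C = ℝ≥0·K with 0 ∉ K and K convex compact). Let V ⊂ C be a convex subcone. If C ≠ closure(V), then there exists an exposed point x of K with x ∉ closure(V). -/

import Mathlib

/-!
Since `closure V ⊆ C` and `C` is the cone over `K`, some `x ∈ K` lies outside the closed convex
cone `closure V`; Hahn–Banach gives `u` with `⟪u, ·⟫ ≤ 0` on `closure V` and `⟪u, x⟫ > 0`.
It remains to find an exposed point of `K` in the open half-space `⟪u, ·⟫ > 0`: a point of `K`
farthest from `-R • u` is exposed (by `⟪x + R • u, ·⟫`), and for `R` large it lies in that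
half-space.
-/

open RealInnerProductSpace

section Cone

variable {E : Type*} [TopologicalSpace E] [AddCommGroup E] [Module ℝ E]

theorem smul_mem_closure_of_forall_smul_mem [ContinuousConstSMul ℝ E] {V : Set E}
    (hVcone : ∀ r : ℝ, 0 ≤ r → ∀ x ∈ V, r • x ∈ V) {r : ℝ} (hr : 0 ≤ r) {x : E}
    (hx : x ∈ closure V) : r • x ∈ closure V :=
  closure_mono (Set.smul_set_subset_iff.2 fun y hy => hVcone r hr y hy)
    (smul_closure_subset r V (Set.smul_mem_smul_set hx))

theorem exists_dual_nonpos_on_closure_of_notMem_closure [IsTopologicalAddGroup E]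
    [ContinuousSMul ℝ E] [LocallyConvexSpace ℝ E] {V : Set E} (hVconv : Convex ℝ V)
    (hVcone : ∀ r : ℝ, 0 ≤ r → ∀ x ∈ V, r • x ∈ V) (hV : V.Nonempty) {x : E}
    (hx : x ∉ closure V) : ∃ f : StrongDual ℝ E, (∀ w ∈ closure V, f w ≤ 0) ∧ 0 < f x := by
  obtain ⟨f, c, hfc, hcx⟩ := geometric_hahn_banach_closed_point hVconv.closure isClosed_closure hx
  have hc : 0 < c := by
    obtain ⟨w, hw⟩ := hV
    simpa using hfc 0 (subset_closure (by simpa using hVcone 0 le_rfl w hw))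
  refine ⟨f, fun w hw => ?_, hc.trans hcx⟩
  by_contra! hpos
  -- the ray through `w` stays in `closure V`, but `f` reaches `c` on it
  have := hfc _ (smul_mem_closure_of_forall_smul_mem hVcone (div_pos hc hpos).le hw)
  rw [map_smul, smul_eq_mul, div_mul_cancel₀ c hpos.ne'] at this
  exact this.false

end Cone

section Exposed

variable {E : Type*} [NormedAddCommGroup E] [InnerProductSpace ℝ E]

theorem mem_exposedPoints_of_isMaxOn_dist {K : Set E} {p x : E} (hx : x ∈ K)
    (hmax : IsMaxOn (fun y => dist y p) K x) : x ∈ K.exposedPoints ℝ := by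
  refine ⟨hx, innerSL ℝ (x - p), fun y hy => ?_⟩
  have hdist : ‖y - p‖ ≤ ‖x - p‖ := by simpa [dist_eq_norm] using hmax hy
  have hcs : ⟪x - p, y - p⟫ ≤ ‖x - p‖ ^ 2 := calc
    _ ≤ ‖x - p‖ * ‖y - p‖ := real_inner_le_norm _ _
    _ ≤ ‖x - p‖ * ‖x - p‖ := by gcongr
    _ = ‖x - p‖ ^ 2 := (sq _).symm
  have hy : ⟪x - p, y⟫ = ⟪x - p, y - p⟫ + ⟪x - p, p⟫ := by rw [inner_sub_right]; ring
  have hx : ⟪x - p, x⟫ = ‖x - p‖ ^ 2 + ⟪x - p, p⟫ := by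
    rw [← real_inner_self_eq_norm_sq, inner_sub_right]; ring
  simp only [innerSL_apply_apply]
  refine ⟨by linarith, fun hge => ?_⟩
  have hsq : ‖(y - p) - (x - p)‖ ^ 2 ≤ 0 := by
    rw [norm_sub_sq_real, real_inner_comm]
    nlinarith [norm_nonneg (y - p)]
  rw [sub_sub_sub_cancel_right] at hsq
  simpa [sub_eq_zero] using hsq.antisymm (sq_nonneg _)

theorem exists_mem_exposedPoints_inner_pos {K : Set E} (hK : IsCompact K) {u x₀ : E}
    (hx₀ : x₀ ∈ K) (hux₀ : 0 < ⟪u, x₀⟫) : ∃ x ∈ K.exposedPoints ℝ, 0 < ⟪u, x⟫ := by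
  obtain ⟨M, hM⟩ := hK.exists_bound_of_continuousOn (f := fun y => ‖y‖ ^ 2) (by fun_prop)
  set R := (M + 1) / ⟪u, x₀⟫
  have hR : 0 < R := div_pos (by linarith [(norm_nonneg _).trans (hM x₀ hx₀)]) hux₀
  obtain ⟨x, hxK, hmax⟩ := hK.exists_isMaxOn ⟨x₀, hx₀⟩
    (continuous_id.dist continuous_const).continuousOn (f := fun y : E => dist y (-(R • u)))
  refine ⟨x, mem_exposedPoints_of_isMaxOn_dist hxK hmax, ?_⟩
  have hdist : ∀ y, dist y (-(R • u)) ^ 2 = ‖y‖ ^ 2 + 2 * R * ⟪u, y⟫ + ‖R • u‖ ^ 2 := fun y => by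
    rw [dist_eq_norm, sub_neg_eq_add, norm_add_sq_real, real_inner_smul_right, real_inner_comm]
    ring
  have hfar : dist x₀ (-(R • u)) ^ 2 ≤ dist x (-(R • u)) ^ 2 := by
    gcongr; exact hmax hx₀
  have hRu : R * ⟪u, x₀⟫ = M + 1 := div_mul_cancel₀ _ hux₀.ne'
  have hx : ‖x‖ ^ 2 ≤ M := by simpa using hM x hxK
  rw [hdist, hdist] at hfar
  nlinarith [sq_nonneg ‖x₀‖]

end Exposed

theorem exists_exposed_point_not_mem_closure_general (n : ℕ)
    (C : Set (EuclideanSpace ℝ (Fin n))) (hCclosed : IsClosed C)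
    (K : Set (EuclideanSpace ℝ (Fin n))) (hK : IsCompact K)
    (h0K : (0 : EuclideanSpace ℝ (Fin n)) ∉ K)
    (hCK : C = {y | ∃ r : ℝ, 0 ≤ r ∧ ∃ x ∈ K, y = r • x})
    (V : Set (EuclideanSpace ℝ (Fin n))) (hVC : V ⊆ C) (hVconv : Convex ℝ V)
    (hVcone : ∀ r : ℝ, 0 ≤ r → ∀ x ∈ V, r • x ∈ V)
    (hne : C ≠ closure V) :
    ∃ x ∈ K.exposedPoints ℝ, x ∉ closure V := by
  obtain ⟨x, hxK, hxV⟩ : ∃ x ∈ K, x ∉ closure V := by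
    by_contra! hKV
    refine hne ((closure_minimal hVC hCclosed).antisymm' ?_)
    rw [hCK]
    rintro _ ⟨r, hr, y, hy, rfl⟩
    exact smul_mem_closure_of_forall_smul_mem hVcone hr (hKV y hy)
  obtain ⟨u, hu_nonpos, hu_pos⟩ : ∃ u, (∀ w ∈ closure V, ⟪u, w⟫ ≤ 0) ∧ 0 < ⟪u, x⟫ := by
    rcases V.eq_empty_or_nonempty with rfl | hV
    · exact ⟨x, by simp, real_inner_self_pos.2 (ne_of_mem_of_not_mem hxK h0K)⟩
    obtain ⟨f, hf_nonpos, hf_pos⟩ :=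
      exists_dual_nonpos_on_closure_of_notMem_closure hVconv hVcone hV hxV
    refine ⟨(InnerProductSpace.toDual ℝ _).symm f, ?_, ?_⟩ <;>
      simpa only [InnerProductSpace.toDual_symm_apply]
  obtain ⟨z, hz, hz_pos⟩ := exists_mem_exposedPoints_inner_pos hK hxK hu_pos
  exact ⟨z, hz, fun hzV => (hu_nonpos z hzV).not_gt hz_pos⟩

/-- If a closed convex cone `C` with compact convex base `K` strictly contains the
closure of a convex subcone `V`, then some exposed point of `K` lies outside
`closure V`. -/
theorem exists_exposed_point_not_mem_closure (n : ℕ)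
    (C : Set (EuclideanSpace ℝ (Fin n))) (hCclosed : IsClosed C) (hCconv : Convex ℝ C)
    (hCcone : ∀ r : ℝ, 0 ≤ r → ∀ x ∈ C, r • x ∈ C)
    (K : Set (EuclideanSpace ℝ (Fin n))) (hK : IsCompact K) (hKconv : Convex ℝ K)
    (h0K : (0 : EuclideanSpace ℝ (Fin n)) ∉ K)
    (hCK : C = {y | ∃ r : ℝ, 0 ≤ r ∧ ∃ x ∈ K, y = r • x})
    (V : Set (EuclideanSpace ℝ (Fin n))) (hVC : V ⊆ C) (hVconv : Convex ℝ V)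
    (hVcone : ∀ r : ℝ, 0 ≤ r → ∀ x ∈ V, r • x ∈ V)
    (hne : C ≠ closure V) :
    ∃ x ∈ K.exposedPoints ℝ, x ∉ closure V :=
  exists_exposed_point_not_mem_closure_general n C hCclosed K hK h0K hCK V hVC hVconv hVcone hne
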